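/- Let R be a finite ring in which every nilpotent element is central. Then R is commutative. -/

import Mathlib

/-!
Idempotents are central (for an idempotent `e`, the square-zero element `e * y * (1 - e)` is
central, hence zero), so a nontrivial idempotent `e` splits `R` into the smaller corner rings of
`e` and `1 - e`, which again have central nilpotents; by induction on `|R|` we may assume that `R`
has no idempotents but `0` and `1`. Then every element is nilpotent or a unit, the nilpotents form
an ideal `N`, and `R ⧸ N` is a finite domain, hence a field `𝔽_q` by Wedderburn. So every
commutator `c = a * b - b * a` lies in `N` and is central, `q` and `b ^ q - b` lie in `N`, and
`c = a * b ^ q - b ^ q * a = q * b ^ (q - 1) * c`. As `q * b ^ (q - 1)` is nilpotent, `c = 0`.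
-/

theorem exists_isIdempotentElem_pow {M : Type*} [Monoid M] [Finite M] (x : M) :
    ∃ n ≠ 0, IsIdempotentElem (x ^ n) := by
  obtain ⟨i, j, hij, hx⟩ := Finite.exists_ne_map_eq_of_infinite (x ^ · : ℕ → M)
  wlog hlt : i < j generalizing i j
  · exact this j i hij.symm hx.symm (by omega)
  set d := j - i
  have periodic : ∀ m ≥ i, ∀ k, x ^ (m + k * d) = x ^ m := by
    intro m hm k
    induction k with
    | zero => simp
    | succ k ih =>
      calc x ^ (m + (k + 1) * d) = x ^ (m - i) * x ^ j * x ^ (k * d) := by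
            rw [← pow_add, ← pow_add]; congr 1; grind
        _ = x ^ (m + k * d) := by
            rw [← hx, ← pow_add, ← pow_add]; congr 1; omega
        _ = x ^ m := ih
  have hd : 0 < d := by omega
  refine ⟨(i + 1) * d, by positivity, ?_⟩
  rw [IsIdempotentElem, ← pow_add]
  exact periodic _ (by nlinarith) _

section

variable {R : Type*} [Ring R]

theorem isNilpotent_or_isUnit_of_forall_isIdempotentElem [Finite R]
    (hidem : ∀ e : R, IsIdempotentElem e → e = 0 ∨ e = 1) (x : R) :
    IsNilpotent x ∨ IsUnit x := by
  obtain ⟨n, hn, hxn⟩ := exists_isIdempotentElem_pow x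
  exact (hidem _ hxn).imp (fun h0 => ⟨n, h0⟩) (fun h1 => .of_pow_eq_one h1 hn)

theorem mul_pow_succ_sub_pow_succ_mul {a b : R} (hb : Commute b (a * b - b * a)) (n : ℕ) :
    a * b ^ (n + 1) - b ^ (n + 1) * a = (n + 1 : ℕ) * b ^ n * (a * b - b * a) := by
  induction n with
  | zero => simp
  | succ n ih =>
    calc a * b ^ (n + 2) - b ^ (n + 2) * a
        = (a * b ^ (n + 1) - b ^ (n + 1) * a) * b + b ^ (n + 1) * (a * b - b * a) := by
          simp only [pow_succ]; noncomm_ring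
      _ = (n + 2 : ℕ) * b ^ (n + 1) * (a * b - b * a) := by
          rw [ih, mul_assoc _ _ b, ← hb.eq, pow_succ]; push_cast; noncomm_ring

namespace IsIdempotentElem

variable {e : R} (he : IsIdempotentElem e)
include he

instance [Finite R] : Finite he.Corner := inferInstanceAs (Finite (Subsemigroup.corner e))

theorem card_corner_lt [Finite R] (he1 : e ≠ 1) : Nat.card he.Corner < Nat.card R :=
  Finite.card_subtype_lt (x := 1) fun h1 =>
    he1 (by simpa using ((Subsemigroup.mem_corner_iff he).mp h1).1)

theorem corner_val_pow_succ (x : he.Corner) (n : ℕ) : (x ^ (n + 1)).1 = x.1 ^ (n + 1) := by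
  induction n with
  | zero => simp
  | succ n ih => rw [pow_succ, pow_succ _ (n + 1), ← ih]; rfl

theorem mul_mul_eq_of_commute_corner (hc : e ∈ Subring.center R)
    (hcomm : ∀ x y : he.Corner, Commute x y) (a b : R) : e * (a * b) = e * (b * a) := by
  have key : ∀ x y : R, e * (x * y) = e * x * e * (e * y * e) := fun x y => by
    have hec : ∀ z : R, z * e = e * z := Subring.mem_center_iff.mp hc
    have hfix : ∀ z : R, e * z * e = e * z := fun z => by
      rw [mul_assoc, hec, ← mul_assoc, he.eq]
    calc e * (x * y) = e * (e * x) * y := by rw [← mul_assoc e e, he.eq, mul_assoc]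
      _ = e * (x * e) * y := by rw [hec x]
      _ = e * x * e * (e * y * e) := by rw [hfix, hfix]; simp only [mul_assoc]
  rw [key, key]
  exact congrArg Subtype.val (hcomm ⟨e * a * e, a, rfl⟩ ⟨e * b * e, b, rfl⟩).eq

end IsIdempotentElem

section NilpotentsCentral

variable (h : ∀ x : R, IsNilpotent x → x ∈ Subring.center R)
include h

theorem commute_of_isNilpotent {x : R} (hx : IsNilpotent x) (y : R) : Commute x y :=
  (Subring.mem_center_iff.mp (h x hx) y).symm

theorem mem_center_of_isIdempotentElem {e : R} (he : IsIdempotentElem e) :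
    e ∈ Subring.center R := by
  have corner_zero : ∀ f : R, IsIdempotentElem f → ∀ y, f * y * (1 - f) = 0 := by
    intro f hf y
    have hf' : (1 - f) * f = 0 := by rw [sub_mul, one_mul, hf.eq, sub_self]
    have hsq : IsNilpotent (f * y * (1 - f)) :=
      ⟨2, by rw [pow_two, mul_assoc, ← mul_assoc (1 - f), ← mul_assoc (1 - f), hf']; simp⟩
    calc f * y * (1 - f) = f * (f * y * (1 - f)) := by rw [← mul_assoc, ← mul_assoc, hf.eq]
      _ = f * y * (1 - f) * f := (commute_of_isNilpotent h hsq f).eq.symm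
      _ = 0 := by rw [mul_assoc, hf', mul_zero]
  have h1 := corner_zero e he
  have h2 := corner_zero (1 - e) he.one_sub
  refine Subring.mem_center_iff.mpr fun y => ?_
  calc y * e = e * y * e := by simpa [sub_mul, mul_sub, sub_eq_zero] using h2 y
    _ = e * y := by simpa [sub_mul, mul_sub, sub_eq_zero, eq_comm] using h1 y

theorem IsIdempotentElem.isNilpotent_mem_center_corner {e : R} (he : IsIdempotentElem e)
    (x : he.Corner) (hx : IsNilpotent x) : x ∈ Subring.center he.Corner := by
  obtain ⟨n, hn⟩ := hx
  have hR : IsNilpotent x.1 :=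
    ⟨n + 1, by rw [← he.corner_val_pow_succ, pow_succ, hn, zero_mul]; rfl⟩
  exact Subring.mem_center_iff.mpr fun y => Subtype.ext (Subring.mem_center_iff.mp (h _ hR) y.1)

theorem commute_of_isNilpotent_pow_sub_self {a b : R} (hab : IsNilpotent (a * b - b * a))
    {q : ℕ} (hq0 : q ≠ 0) (hq : IsNilpotent (q : R)) (hb : IsNilpotent (b ^ q - b)) :
    Commute a b := by
  set c := a * b - b * a with hc_def
  obtain ⟨n, rfl⟩ := Nat.exists_eq_add_one_of_ne_zero hq0
  have hfrob : a * b ^ (n + 1) - b ^ (n + 1) * a = c :=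
    calc a * b ^ (n + 1) - b ^ (n + 1) * a
        = (a * (b ^ (n + 1) - b) - (b ^ (n + 1) - b) * a) + c := by
          rw [hc_def]; noncomm_ring
      _ = c := by rw [(commute_of_isNilpotent h hb a).eq, sub_self, zero_add]
  have hu : IsNilpotent ((n + 1 : ℕ) * b ^ n : R) :=
    (Nat.cast_commute _ _).isNilpotent_mul_right hq
  have hc : (1 - (n + 1 : ℕ) * b ^ n : R) * c = 0 := by
    rw [sub_mul, one_mul, ← mul_pow_succ_sub_pow_succ_mul (commute_of_isNilpotent h hab b).symm,
      hfrob, sub_self]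
  exact sub_eq_zero.mp ((hu.isUnit_one_sub.mul_right_eq_zero).mp hc)

def nilpotentIdeal : TwoSidedIdeal R :=
  .mk' {x | IsNilpotent x} .zero
    (fun hx hy => (commute_of_isNilpotent h hx _).isNilpotent_add hx hy) .neg
    (fun hy => (commute_of_isNilpotent h hy _).symm.isNilpotent_mul_left hy)
    (fun hx => (commute_of_isNilpotent h hx _).isNilpotent_mul_right hx)

theorem mk_nilpotentIdeal_eq_zero_iff {x : R} :
    Ideal.Quotient.mk (nilpotentIdeal h).asIdeal x = 0 ↔ IsNilpotent x := by
  rw [Ideal.Quotient.eq_zero_iff_mem, TwoSidedIdeal.mem_asIdeal, nilpotentIdeal,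
    TwoSidedIdeal.mem_mk', Set.mem_ofPred_eq]

theorem isDomain_quotient_nilpotentIdeal [Nontrivial R]
    (hR : ∀ x : R, IsNilpotent x ∨ IsUnit x) : IsDomain (R ⧸ (nilpotentIdeal h).asIdeal) := by
  have : Nontrivial (R ⧸ (nilpotentIdeal h).asIdeal) :=
    ⟨0, 1, fun h01 => not_isNilpotent_one ((mk_nilpotentIdeal_eq_zero_iff h).mp (by
      rw [map_one]; exact h01.symm))⟩
  have : NoZeroDivisors (R ⧸ (nilpotentIdeal h).asIdeal) := by
    refine ⟨fun {x y} hxy => ?_⟩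
    obtain ⟨x, rfl⟩ := Ideal.Quotient.mk_surjective x
    obtain ⟨y, rfl⟩ := Ideal.Quotient.mk_surjective y
    simp only [← map_mul, mk_nilpotentIdeal_eq_zero_iff] at hxy ⊢
    rcases hR x with hx | hx
    · exact .inl hx
    rcases hR y with hy | hy
    · exact .inr hy
    exact absurd hxy (hx.mul hy).not_isNilpotent
  exact NoZeroDivisors.to_isDomain _

theorem commute_of_isField_quotient_nilpotentIdeal [Finite (R ⧸ (nilpotentIdeal h).asIdeal)]
    (hF : IsField (R ⧸ (nilpotentIdeal h).asIdeal)) (a b : R) : Commute a b := by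
  let := hF.toField
  have := Fintype.ofFinite (R ⧸ (nilpotentIdeal h).asIdeal)
  refine commute_of_isNilpotent_pow_sub_self h
    (q := Fintype.card (R ⧸ (nilpotentIdeal h).asIdeal)) ?_ Fintype.card_ne_zero ?_ ?_ <;>
    rw [← mk_nilpotentIdeal_eq_zero_iff h]
  · rw [map_sub, map_mul, map_mul, mul_comm, sub_self]
  · rw [map_natCast, FiniteField.cast_card_eq_zero]
  · rw [map_sub, map_pow, FiniteField.pow_card, sub_self]

theorem commute_of_isNilpotent_or_isUnit [Finite R] (hR : ∀ x : R, IsNilpotent x ∨ IsUnit x)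
    (a b : R) : Commute a b := by
  cases subsingleton_or_nontrivial R
  · exact Subsingleton.elim _ _
  have : Finite (R ⧸ (nilpotentIdeal h).asIdeal) :=
    .of_surjective _ Ideal.Quotient.mk_surjective
  have := isDomain_quotient_nilpotentIdeal h hR
  exact commute_of_isField_quotient_nilpotentIdeal h (Finite.isDomain_to_isField _) a b

end NilpotentsCentral

end

theorem finite_ring_comm_of_nilpotents_central {R : Type*} [Ring R] [Fintype R]
    (h : ∀ x : R, IsNilpotent x → x ∈ Subring.center R) :
    ∀ a b : R, a * b = b * a := by
  induction hn : Nat.card R using Nat.strong_induction_on generalizing R with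
  | _ n ih =>
  by_cases hidem : ∀ e : R, IsIdempotentElem e → e = 0 ∨ e = 1
  · exact commute_of_isNilpotent_or_isUnit h (isNilpotent_or_isUnit_of_forall_isIdempotentElem hidem)
  push Not at hidem
  obtain ⟨e, he, he0, he1⟩ := hidem
  have corner_comm {f : R} (hf : IsIdempotentElem f) (hf1 : f ≠ 1) (x y : hf.Corner) :
      Commute x y :=
    have := Fintype.ofFinite hf.Corner
    ih _ (hn ▸ hf.card_corner_lt hf1) (hf.isNilpotent_mem_center_corner h) rfl x y
  have h1e : 1 - e ≠ 1 := sub_eq_self.not.mpr he0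
  intro a b
  calc a * b = e * (a * b) + (1 - e) * (a * b) := by noncomm_ring
    _ = e * (b * a) + (1 - e) * (b * a) := by
      rw [he.mul_mul_eq_of_commute_corner (mem_center_of_isIdempotentElem h he)
          (corner_comm he he1),
        he.one_sub.mul_mul_eq_of_commute_corner (mem_center_of_isIdempotentElem h he.one_sub)
          (corner_comm he.one_sub h1e)]
    _ = b * a := by noncomm_ring
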